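/- For θ ∈ [0, π/4) and every n ≥ 1, all zeros of L_n(z, F_θ) in ℂ \ {0} lie on the unit circle, in the set {z : |z| = 1, 2θ < |arg z| < π − 2θ}, and each zero is simple. -/

import Mathlib

/-!
`Fmat θ` is real symmetric, so `S z (Fmat θ)` has trace `z + z⁻¹` and determinant
`cos² 2θ`. By Cayley–Hamilton the traces of its powers satisfy the Chebyshev recurrence, whence
`L n z = 2 cᶰ Tₙ((z + z⁻¹) / 2c)` with `c = cos 2θ > 0`. A zero of `Tₙ` is `cos α` with
`cos nα = 0`; then `sin nα ≠ 0`, and `sin nα = Uₙ₋₁(cos α) sin α` shows that the zero is real in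
`(-1, 1)` and simple. So `z + z⁻¹ = 2a` with `|a| < c`, which forces `z = e^{± i arccos a}`, and
`2θ = arccos c < arccos a < π - arccos c`. Finally `z ≠ ±1`, so the chain-rule factor `1 - z⁻²` of
`d(z + z⁻¹)/dz` does not vanish either.
-/

open Matrix Complex Real

noncomputable def S (z : ℂ) (G : Matrix (Fin 2) (Fin 2) ℂ) : Matrix (Fin 2) (Fin 2) ℂ :=
  G * Matrix.diagonal ![z, z⁻¹] * Gᴴ

noncomputable def L (n : ℕ) (z : ℂ) (G : Matrix (Fin 2) (Fin 2) ℂ) : ℂ :=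
  ((S z G) ^ n).trace

noncomputable def Fmat (θ : ℝ) : Matrix (Fin 2) (Fin 2) ℂ :=
  !![(Real.cos θ : ℂ), (Real.sin θ : ℂ); (Real.sin θ : ℂ), (Real.cos θ : ℂ)]

open Polynomial
open Polynomial.Chebyshev (T)

namespace Matrix

variable {R : Type*} [CommRing R]

theorem sq_eq_trace_smul_sub_det_smul_fin_two (A : Matrix (Fin 2) (Fin 2) R) :
    A ^ 2 = A.trace • A - A.det • 1 := by
  ext i j
  fin_cases i <;> fin_cases j <;>
    simp [sq, mul_apply, trace_fin_two, det_fin_two] <;> ring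

theorem trace_pow_add_two_fin_two (A : Matrix (Fin 2) (Fin 2) R) (n : ℕ) :
    (A ^ (n + 2)).trace = A.trace * (A ^ (n + 1)).trace - A.det * (A ^ n).trace := by
  rw [pow_add, sq_eq_trace_smul_sub_det_smul_fin_two, Matrix.mul_sub, Matrix.mul_smul,
    Matrix.mul_smul, mul_one, ← pow_succ, trace_sub, trace_smul, trace_smul, smul_eq_mul,
    smul_eq_mul]

theorem trace_pow_fin_two_eq_eval_T (A : Matrix (Fin 2) (Fin 2) R) {c w : R}
    (htr : A.trace = 2 * c * w) (hdet : A.det = c ^ 2) (n : ℕ) :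
    (A ^ n).trace = 2 * c ^ n * (T R n).eval w := by
  induction n using Nat.twoStepInduction with
  | zero => norm_num [trace_one]
  | one => simp [htr]
  | more n ih₀ ih₁ =>
    rw [trace_pow_add_two_fin_two, ih₀, ih₁, htr, hdet]
    push_cast
    rw [Chebyshev.T_add_two]
    simp only [eval_sub, eval_mul, eval_ofNat, eval_X]
    ring

end Matrix

namespace Polynomial.Chebyshev

theorem sin_ne_zero_and_eval_U_ne_zero_of_eval_T_cos_eq_zero {n : ℤ} {x : ℂ}
    (h : (T ℂ n).eval (Complex.cos x) = 0) :
    Complex.sin x ≠ 0 ∧ (U ℂ (n - 1)).eval (Complex.cos x) ≠ 0 := by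
  rw [T_complex_cos] at h
  have hsin : Complex.sin (n * x) ≠ 0 := by
    intro h'
    simpa [h, h'] using Complex.sin_sq_add_cos_sq (n * x)
  have hU := U_complex_cos x (n - 1)
  rw [Int.cast_sub, Int.cast_one, sub_add_cancel] at hU
  rw [← hU] at hsin
  exact (mul_ne_zero_iff.mp hsin).symm

theorem eval_derivative_T_ne_zero_of_eval_T_eq_zero {n : ℤ} {w : ℂ} (h : (T ℂ n).eval w = 0) :
    (derivative (T ℂ n)).eval w ≠ 0 := by
  have hn : n ≠ 0 := by rintro rfl; simp at h
  obtain ⟨x, rfl⟩ := Complex.cos_surjective w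
  rw [T_derivative_eq_U, eval_mul, eval_intCast]
  exact mul_ne_zero (Int.cast_ne_zero.mpr hn)
    (sin_ne_zero_and_eval_U_ne_zero_of_eval_T_cos_eq_zero h).2

theorem exists_real_abs_lt_one_of_eval_T_eq_zero {n : ℤ} {w : ℂ} (h : (T ℂ n).eval w = 0) :
    ∃ r : ℝ, |r| < 1 ∧ w = r := by
  have hn : n ≠ 0 := by rintro rfl; simp at h
  obtain ⟨x, rfl⟩ := Complex.cos_surjective w
  have hsin := (sin_ne_zero_and_eval_U_ne_zero_of_eval_T_cos_eq_zero h).1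
  rw [T_complex_cos, Complex.cos_eq_zero_iff] at h
  obtain ⟨k, hk⟩ := h
  have hx : x = (x.re : ℂ) := by
    have him : (n : ℝ) * x.im = 0 := by
      simpa using congrArg Complex.im hk
    exact Complex.ext rfl (by simpa [hn] using him)
  rw [hx, ← Complex.ofReal_sin, Complex.ofReal_ne_zero] at hsin
  rw [hx, ← Complex.ofReal_cos]
  refine ⟨Real.cos x.re, ?_, rfl⟩
  have := Real.sin_sq_add_cos_sq x.re
  rw [← sq_lt_one_iff_abs_lt_one]
  have : 0 < Real.sin x.re ^ 2 := by positivity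
  linarith

end Polynomial.Chebyshev

theorem conjTranspose_Fmat (θ : ℝ) : (Fmat θ)ᴴ = Fmat θ := by
  ext i j
  fin_cases i <;> fin_cases j <;> simp [Fmat, -Complex.ofReal_cos, -Complex.ofReal_sin]

theorem trace_S_Fmat (θ : ℝ) (z : ℂ) : (S z (Fmat θ)).trace = z + z⁻¹ := by
  have h : (Real.cos θ : ℂ) ^ 2 + (Real.sin θ : ℂ) ^ 2 = 1 := by
    exact_mod_cast Real.cos_sq_add_sin_sq θ
  rw [S, conjTranspose_Fmat, Fmat, diagonal_vec2, mul_fin_two, mul_fin_two, trace_fin_two_of]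
  linear_combination (z + z⁻¹) * h

theorem det_Fmat (θ : ℝ) : (Fmat θ).det = Real.cos (2 * θ) := by
  rw [Fmat, det_fin_two_of, Real.cos_two_mul', Complex.ofReal_sub, Complex.ofReal_pow,
    Complex.ofReal_pow, sq, sq]

theorem det_S_Fmat (θ : ℝ) {z : ℂ} (hz : z ≠ 0) : (S z (Fmat θ)).det = Real.cos (2 * θ) ^ 2 := by
  rw [S, conjTranspose_Fmat, det_mul, det_mul, det_Fmat, diagonal_vec2, det_fin_two_of,
    mul_inv_cancel₀ hz]
  ring

theorem L_Fmat_eq_eval_T (θ : ℝ) (hθ : Real.cos (2 * θ) ≠ 0) {z : ℂ} (hz : z ≠ 0) (n : ℕ) :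
    L n z (Fmat θ) =
      2 * (Real.cos (2 * θ) : ℂ) ^ n * (T ℂ n).eval ((z + z⁻¹) / (2 * Real.cos (2 * θ))) := by
  have hc : (Real.cos (2 * θ) : ℂ) ≠ 0 := Complex.ofReal_ne_zero.mpr hθ
  refine trace_pow_fin_two_eq_eval_T _ ?_ (det_S_Fmat θ hz) n
  rw [trace_S_Fmat]
  field_simp

namespace Complex

theorem eq_exp_or_eq_exp_neg_of_add_inv_eq_two_cos {z : ℂ} (hz : z ≠ 0) {β : ℂ}
    (h : z + z⁻¹ = 2 * cos β) : z = exp (β * I) ∨ z = exp (-β * I) := by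
  have hprod : exp (β * I) * exp (-β * I) = 1 := by rw [← exp_add]; simp
  have hquad : (z - exp (β * I)) * (z - exp (-β * I)) = 0 := by
    linear_combination z * h - mul_inv_cancel₀ hz + z * two_cos β + hprod
  rcases mul_eq_zero.mp hquad with h | h
  · exact .inl (sub_eq_zero.mp h)
  · exact .inr (sub_eq_zero.mp h)

theorem norm_eq_one_and_re_eq_of_add_inv_eq {z : ℂ} (hz : z ≠ 0) {a : ℝ} (ha : |a| ≤ 1)
    (h : z + z⁻¹ = 2 * a) : ‖z‖ = 1 ∧ z.re = a := by
  obtain ⟨ha₁, ha₂⟩ := abs_le.mp ha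
  rw [← Real.cos_arccos ha₁ ha₂, ofReal_cos] at h
  rcases eq_exp_or_eq_exp_neg_of_add_inv_eq_two_cos hz h with rfl | rfl
  · exact ⟨norm_exp_ofReal_mul_I _, by rw [exp_ofReal_mul_I_re, Real.cos_arccos ha₁ ha₂]⟩
  · rw [← ofReal_neg]
    exact ⟨norm_exp_ofReal_mul_I _,
      by rw [exp_ofReal_mul_I_re, Real.cos_neg, Real.cos_arccos ha₁ ha₂]⟩

theorem abs_arg_eq_arccos_re {z : ℂ} (hz : ‖z‖ = 1) : |arg z| = Real.arccos z.re := by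
  have hz₀ : z ≠ 0 := by rintro rfl; simp at hz
  rw [← Real.arccos_cos (abs_nonneg _) (abs_arg_le_pi z), Real.cos_abs, cos_arg hz₀, hz, div_one]

theorem sq_ne_one_of_abs_re_lt_one {z : ℂ} (h : |z.re| < 1) : z ^ 2 ≠ 1 := by
  rw [Ne, sq_eq_one_iff]
  rintro (rfl | rfl) <;> simp at h

end Complex

theorem Real.arccos_lt_arccos_and_arccos_lt_pi_sub_arccos {a b : ℝ} (hab : |a| < b) (hb : b ≤ 1) :
    Real.arccos b < Real.arccos a ∧ Real.arccos a < Real.pi - Real.arccos b := by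
  obtain ⟨hab₁, hab₂⟩ := abs_lt.mp hab
  refine ⟨Real.arccos_lt_arccos (by linarith) hab₂ hb, ?_⟩
  rw [← Real.arccos_neg]
  exact Real.arccos_lt_arccos (by linarith) hab₁ (by linarith)

theorem hasDerivAt_L_Fmat (θ : ℝ) (hθ : Real.cos (2 * θ) ≠ 0) {z : ℂ} (hz : z ≠ 0) (n : ℕ) :
    HasDerivAt (fun z => L n z (Fmat θ))
      (2 * (Real.cos (2 * θ) : ℂ) ^ n *
        ((derivative (T ℂ n)).eval ((z + z⁻¹) / (2 * Real.cos (2 * θ))) *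
          ((1 - (z ^ 2)⁻¹) / (2 * Real.cos (2 * θ))))) z := by
  have hinner : HasDerivAt (fun z : ℂ => (z + z⁻¹) / (2 * Real.cos (2 * θ)))
      ((1 - (z ^ 2)⁻¹) / (2 * Real.cos (2 * θ))) z := by
    rw [sub_eq_add_neg]
    exact ((hasDerivAt_id' z).add (hasDerivAt_inv hz)).div_const _
  refine (((Polynomial.hasDerivAt _ _).comp z hinner).const_mul _).congr_of_eventuallyEq ?_
  filter_upwards [eventually_ne_nhds hz] with y hy
  exact L_Fmat_eq_eval_T θ hθ hy n

theorem stmt18_general (θ : ℝ) (hθ : θ ∈ Set.Ico (0 : ℝ) (Real.pi / 4)) (n : ℕ)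
    (z₀ : ℂ) (hz₀ : z₀ ≠ 0) (hroot : L n z₀ (Fmat θ) = 0) :
    ‖z₀‖ = 1 ∧ 2 * θ < |Complex.arg z₀| ∧
      |Complex.arg z₀| < Real.pi - 2 * θ ∧
      deriv (fun z : ℂ => L n z (Fmat θ)) z₀ ≠ 0 := by
  obtain ⟨hθ₀, hθ₁⟩ := hθ
  set c := Real.cos (2 * θ)
  have hc : 0 < c := Real.cos_pos_of_mem_Ioo ⟨by linarith [Real.pi_pos], by linarith⟩
  have hc' : (c : ℂ) ≠ 0 := Complex.ofReal_ne_zero.mpr hc.ne'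
  have hc₂ : (2 * c : ℂ) ≠ 0 := mul_ne_zero two_ne_zero hc'
  set w := (z₀ + z₀⁻¹) / (2 * c) with hw_def
  have hT : (T ℂ n).eval w = 0 := by
    rw [L_Fmat_eq_eval_T θ hc.ne' hz₀] at hroot
    exact (mul_eq_zero.mp hroot).resolve_left (mul_ne_zero two_ne_zero (pow_ne_zero _ hc'))
  obtain ⟨r, hr, hw⟩ := Chebyshev.exists_real_abs_lt_one_of_eval_T_eq_zero hT
  have hsum : z₀ + z₀⁻¹ = 2 * ((c * r : ℝ) : ℂ) := by
    rw [Complex.ofReal_mul, ← hw, hw_def]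
    field_simp
  have hcr : |c * r| < c := by
    rw [abs_mul, abs_of_pos hc]
    exact mul_lt_of_lt_one_right hc hr
  have hc₁ : c ≤ 1 := Real.cos_le_one _
  obtain ⟨hnorm, hre⟩ := Complex.norm_eq_one_and_re_eq_of_add_inv_eq hz₀ (by linarith) hsum
  have harg : |Complex.arg z₀| = Real.arccos (c * r) := hre ▸ Complex.abs_arg_eq_arccos_re hnorm
  have h2θ : Real.arccos c = 2 * θ := Real.arccos_cos (by linarith) (by linarith [Real.pi_pos])
  obtain ⟨hlow, hhigh⟩ := Real.arccos_lt_arccos_and_arccos_lt_pi_sub_arccos hcr hc₁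
  rw [h2θ, ← harg] at hlow hhigh
  have hsq : 1 - (z₀ ^ 2)⁻¹ ≠ 0 := fun h ↦
    Complex.sq_ne_one_of_abs_re_lt_one (hre ▸ hcr.trans_le hc₁)
      (inv_eq_one.mp (sub_eq_zero.mp h).symm)
  refine ⟨hnorm, hlow, hhigh, ?_⟩
  rw [(hasDerivAt_L_Fmat θ hc.ne' hz₀ n).deriv]
  exact mul_ne_zero (mul_ne_zero two_ne_zero (pow_ne_zero _ hc'))
    (mul_ne_zero (Chebyshev.eval_derivative_T_ne_zero_of_eval_T_eq_zero hT) (div_ne_zero hsq hc₂))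

theorem stmt18 (θ : ℝ) (hθ : θ ∈ Set.Ico (0 : ℝ) (Real.pi / 4)) (n : ℕ) (hn : 1 ≤ n)
    (z₀ : ℂ) (hz₀ : z₀ ≠ 0) (hroot : L n z₀ (Fmat θ) = 0) :
    ‖z₀‖ = 1 ∧ 2 * θ < |Complex.arg z₀| ∧
      |Complex.arg z₀| < Real.pi - 2 * θ ∧
      deriv (fun z : ℂ => L n z (Fmat θ)) z₀ ≠ 0 :=
  stmt18_general θ hθ n z₀ hz₀ hroot
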